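/- arXiv:1610.00240 — 2 statements merged into one kernel-verified Lean document; each statement's English description precedes it below -/
import Mathlib

section
/- Let ρ : ℝ³ → ℝ and u : ℝ³ → ℝ³ be twice continuously differentiable, let ω = ∇×u, and assume that for every x ∈ ℝ³ with x₃ = 0 one has u₃(x) = 0, ω₁(x) = 0 and ω₂(x) = 0. Then for every x with x₃ = 0 and for j = 1, 2, one has ρ(x) · (Σᵢ uᵢ(x) ∂ᵢω_j(x) − Σᵢ ωᵢ(x) ∂ᵢu_j(x)) = 0; that is, ρ(u·∇ω − ω·∇u) × n = 0 on the flat boundary. -/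
open scoped BigOperators

/-- Spatial partial derivative `∂ᵢ f` of a scalar function on `ℝ³`. -/
noncomputable def pd (i : Fin 3) (f : (Fin 3 → ℝ) → ℝ) (x : Fin 3 → ℝ) : ℝ :=
  fderiv ℝ f x (Pi.single i 1)

/-- The curl `∇ × u` of a vector field on `ℝ³`. -/
noncomputable def curl (u : (Fin 3 → ℝ) → Fin 3 → ℝ) (x : Fin 3 → ℝ) : Fin 3 → ℝ :=
  ![pd 1 (fun y => u y 2) x - pd 2 (fun y => u y 1) x,
    pd 2 (fun y => u y 0) x - pd 0 (fun y => u y 2) x,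
    pd 0 (fun y => u y 1) x - pd 1 (fun y => u y 0) x]

/-! On the flat boundary `u` is tangent and `ω` is normal. The convective term `u·∇ω_j` is then a
tangential derivative of `ω_j`, which vanishes on the boundary. The stretching term `ω·∇u_j`
reduces to `ω₃ ∂₃u_j`, and `∂₃u_j = 0` for `j = 1, 2` since `ω₁ = ω₂ = 0` and the tangential
derivatives of `u₃` vanish on the boundary. (In the code coordinates are indexed from `0`.) -/

section LineDeriv

variable {𝕜 E F : Type*} [NontriviallyNormedField 𝕜] [NormedAddCommGroup E] [NormedSpace 𝕜 E]
  [NormedAddCommGroup F] [NormedSpace 𝕜 F]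

theorem fderiv_apply_eq_zero_of_forall_add_smul {f : E → F} {x v : E}
    (hf : DifferentiableAt 𝕜 f x) (h : ∀ t : 𝕜, f (x + t • v) = 0) : fderiv 𝕜 f x v = 0 := by
  rw [← hf.lineDeriv_eq_fderiv, lineDeriv]
  simp [h]

end LineDeriv

theorem fderiv_apply_eq_zero_of_eq_zero_on_coordPlane {ι : Type*} [Fintype ι]
    {f : (ι → ℝ) → ℝ} {x v : ι → ℝ} {k : ι} (hf : DifferentiableAt ℝ f x)
    (h0 : ∀ y : ι → ℝ, y k = 0 → f y = 0) (hx : x k = 0) (hv : v k = 0) :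
    fderiv ℝ f x v = 0 :=
  fderiv_apply_eq_zero_of_forall_add_smul hf fun t => h0 _ (by simp [hx, hv])

theorem sum_mul_pd_eq_fderiv (f : (Fin 3 → ℝ) → ℝ) (x v : Fin 3 → ℝ) :
    ∑ i, v i * pd i f x = fderiv ℝ f x v := by
  conv_rhs => rw [← Finset.univ_sum_single v]
  simp only [pd, map_sum]
  refine Finset.sum_congr rfl fun i _ => ?_
  rw [← smul_eq_mul, ← map_smul, ← Pi.single_smul, smul_eq_mul, mul_one]

theorem ContDiff.pd {n : WithTop ℕ∞} {f : (Fin 3 → ℝ) → ℝ} (hf : ContDiff ℝ (n + 1) f)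
    (i : Fin 3) : ContDiff ℝ n (pd i f) :=
  (hf.fderiv_right le_rfl).clm_apply contDiff_const

theorem ContDiff.curl {n : WithTop ℕ∞} {u : (Fin 3 → ℝ) → Fin 3 → ℝ}
    (hu : ContDiff ℝ (n + 1) u) : ContDiff ℝ n (curl u) := by
  have hcomp (k : Fin 3) : ContDiff ℝ (n + 1) (fun y => u y k) := contDiff_pi.1 hu k
  refine contDiff_pi.2 fun j => ?_
  fin_cases j
  · exact ((hcomp 2).pd 1).sub ((hcomp 1).pd 2)
  · exact ((hcomp 0).pd 2).sub ((hcomp 2).pd 0)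
  · exact ((hcomp 1).pd 0).sub ((hcomp 0).pd 1)

def SatisfiesFlatSlipBC (u : (Fin 3 → ℝ) → Fin 3 → ℝ) : Prop :=
  ∀ x : Fin 3 → ℝ, x 2 = 0 → u x 2 = 0 ∧ curl u x 0 = 0 ∧ curl u x 1 = 0

namespace SatisfiesFlatSlipBC

variable {u : (Fin 3 → ℝ) → Fin 3 → ℝ} {x : Fin 3 → ℝ} {j : Fin 3}

theorem curl_eq_zero (hbc : SatisfiesFlatSlipBC u) (hx : x 2 = 0) (hj : j ≠ 2) :
    curl u x j = 0 := by
  fin_cases j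
  exacts [(hbc x hx).2.1, (hbc x hx).2.2, absurd rfl hj]

theorem pd_normal_eq_zero (hbc : SatisfiesFlatSlipBC u)
    (hu : DifferentiableAt ℝ (fun y => u y 2) x) (hx : x 2 = 0) (hj : j ≠ 2) :
    pd 2 (fun y => u y j) x = 0 := by
  have htan (i : Fin 3) (hi : i ≠ 2) : pd i (fun y => u y 2) x = 0 :=
    fderiv_apply_eq_zero_of_eq_zero_on_coordPlane hu (fun y hy => (hbc y hy).1) hx
      (Pi.single_eq_of_ne hi.symm 1)
  obtain ⟨-, hω₁, hω₂⟩ := hbc x hx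
  fin_cases j
  · simp only [curl, Fin.zero_eta, Fin.isValue, Matrix.cons_val_one, Matrix.cons_val_zero] at hω₂ ⊢
    linarith [htan 0 (by decide)]
  · simp only [curl, Fin.mk_one, Fin.isValue, Matrix.cons_val_zero] at hω₁ ⊢
    linarith [htan 1 (by decide)]
  · exact absurd rfl hj

theorem convective_curl_eq_zero (hbc : SatisfiesFlatSlipBC u)
    (hω : DifferentiableAt ℝ (fun y => curl u y j) x) (hx : x 2 = 0) (hj : j ≠ 2) :
    ∑ i, u x i * pd i (fun y => curl u y j) x = 0 := by
  rw [sum_mul_pd_eq_fderiv]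
  exact fderiv_apply_eq_zero_of_eq_zero_on_coordPlane hω
    (fun y hy => hbc.curl_eq_zero hy hj) hx (hbc x hx).1

theorem stretching_eq_zero (hbc : SatisfiesFlatSlipBC u)
    (hu : DifferentiableAt ℝ (fun y => u y 2) x) (hx : x 2 = 0) (hj : j ≠ 2) :
    ∑ i, curl u x i * pd i (fun y => u y j) x = 0 := by
  rw [Fin.sum_univ_three, hbc.curl_eq_zero hx (by decide : (0 : Fin 3) ≠ 2),
    hbc.curl_eq_zero hx (by decide : (1 : Fin 3) ≠ 2), hbc.pd_normal_eq_zero hu hx hj]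
  ring

end SatisfiesFlatSlipBC

theorem tangential_vorticity_transport_vanishes_general
    (ρ : (Fin 3 → ℝ) → ℝ) (u : (Fin 3 → ℝ) → Fin 3 → ℝ)
    (hu : ContDiff ℝ 2 u)
    (hbc : ∀ x : Fin 3 → ℝ, x 2 = 0 →
      u x 2 = 0 ∧ curl u x 0 = 0 ∧ curl u x 1 = 0) :
    ∀ x : Fin 3 → ℝ, x 2 = 0 →
      (ρ x * ((∑ i : Fin 3, u x i * pd i (fun y => curl u y 0) x)
          - ∑ i : Fin 3, curl u x i * pd i (fun y => u y 0) x) = 0)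
      ∧ (ρ x * ((∑ i : Fin 3, u x i * pd i (fun y => curl u y 1) x)
          - ∑ i : Fin 3, curl u x i * pd i (fun y => u y 1) x) = 0) := by
  intro x hx
  have hbc : SatisfiesFlatSlipBC u := hbc
  have hu₃ : DifferentiableAt ℝ (fun y => u y 2) x :=
    (contDiff_pi.1 hu 2).differentiable two_ne_zero x
  have hω (j : Fin 3) : DifferentiableAt ℝ (fun y => curl u y j) x :=
    (contDiff_pi.1 (ContDiff.curl (n := 1) hu) j).differentiable one_ne_zero x
  constructor <;>
  · rw [hbc.convective_curl_eq_zero (hω _) hx (by decide),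
      hbc.stretching_eq_zero hu₃ hx (by decide)]
    ring

/-- Under the slip boundary conditions `u₃ = 0`, `ω₁ = ω₂ = 0` on the flat
boundary `{x₃ = 0}`, the tangential components of `ρ(u·∇ω − ω·∇u)` vanish on
the boundary, i.e. `ρ(u·∇ω − ω·∇u) × n = 0` there (Proposition 2.2). -/
theorem tangential_vorticity_transport_vanishes
    (ρ : (Fin 3 → ℝ) → ℝ) (u : (Fin 3 → ℝ) → Fin 3 → ℝ)
    (hρ : ContDiff ℝ 2 ρ) (hu : ContDiff ℝ 2 u)
    (hbc : ∀ x : Fin 3 → ℝ, x 2 = 0 →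
      u x 2 = 0 ∧ curl u x 0 = 0 ∧ curl u x 1 = 0) :
    ∀ x : Fin 3 → ℝ, x 2 = 0 →
      (ρ x * ((∑ i : Fin 3, u x i * pd i (fun y => curl u y 0) x)
          - ∑ i : Fin 3, curl u x i * pd i (fun y => u y 0) x) = 0)
      ∧ (ρ x * ((∑ i : Fin 3, u x i * pd i (fun y => curl u y 1) x)
          - ∑ i : Fin 3, curl u x i * pd i (fun y => u y 1) x) = 0) :=
  tangential_vorticity_transport_vanishes_general ρ u hu hbc
end

section
/- Let u : ℝ × ℝ³ → ℝ³ be a continuously differentiable vector field which is bounded and has bounded spatial derivatives, and assume that for every t ≥ 0 and every x with x₃ = 0 one has u₃(t,x) = 0, ∂₃u₁(t,x) = 0 and ∂₃u₂(t,x) = 0. Let ρ : ℝ × ℝ³ → ℝ be twice continuously differentiable with bounded derivatives, solving the transport equation ∂ₜρ + u·∇ρ = 0 at every point. If ∂₃ρ(0,x) = 0 for every x with x₃ = 0, then ∂₃ρ(t,x) = 0 for every t ≥ 0 and every x with x₃ = 0; that is, ∇ρ·n = 0 on the flat boundary is preserved in time. -/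
open scoped BigOperators

/-- Time derivative `∂ₜ f` of a scalar function on `ℝ × ℝ³`. -/
noncomputable def pt (f : ℝ × (Fin 3 → ℝ) → ℝ) (p : ℝ × (Fin 3 → ℝ)) : ℝ :=
  fderiv ℝ f p (1, 0)

/-- Spatial partial derivative `∂ᵢ f` of a scalar function on `ℝ × ℝ³`. -/
noncomputable def pdx (i : Fin 3) (f : ℝ × (Fin 3 → ℝ) → ℝ) (p : ℝ × (Fin 3 → ℝ)) : ℝ :=
  fderiv ℝ f p (0, Pi.single i 1)

/-!
Follow the characteristic of `u` backwards from a boundary point `(T, x)`. Since `u₃ = 0` on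
`{x₃ = 0}`, that characteristic stays in the boundary plane. Differentiating the transport
equation in the normal direction and using `∂₃u₁ = ∂₃u₂ = 0` shows that along it
`d/dt ∂₃ρ = -(∂₃u₃) ∂₃ρ`, a linear ODE with bounded coefficient, so by Grönwall `∂₃ρ` vanishes
along the whole characteristic as soon as it vanishes at `t = 0`.
-/

open Set

theorem lipschitzWith_pi {α ι : Type*} [PseudoEMetricSpace α] [Fintype ι] {β : ι → Type*}
    [∀ i, PseudoEMetricSpace (β i)] {K : NNReal} {f : α → ∀ i, β i}
    (h : ∀ i, LipschitzWith K fun x => f x i) : LipschitzWith K f :=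
  fun x y => edist_pi_le_iff.2 fun i => h i x y

theorem exists_eq_right_forall_mem_Icc_hasDerivWithinAt {E : Type*} [NormedAddCommGroup E]
    [NormedSpace ℝ E] [CompleteSpace E] {v : ℝ → E → E} {K : NNReal} {C : ℝ}
    (hlip : ∀ t, LipschitzWith K (v t)) (hcont : ∀ y, Continuous (v · y))
    (hbdd : ∀ t y, ‖v t y‖ ≤ C) {a b : ℝ} (hab : a ≤ b) (x : E) :
    ∃ γ : ℝ → E, γ b = x ∧ ∀ t ∈ Icc a b, HasDerivWithinAt γ (v t (γ t)) (Icc a b) t := by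
  have hpl : IsPicardLindelof v (tmin := a) (tmax := b) ⟨b, hab, le_rfl⟩ x
      (C * (b - a)).toNNReal 0 C.toNNReal K :=
    { lipschitzOnWith := fun t _ => (hlip t).lipschitzOnWith
      continuousOn := fun y _ => (hcont y).continuousOn
      norm_le := fun t _ y _ => (hbdd t y).trans (Real.le_coe_toNNReal C)
      mul_max_le := by
        simp [Real.coe_toNNReal', max_eq_right (sub_nonneg.2 hab),
          max_mul_of_nonneg _ _ (sub_nonneg.2 hab)] }
  exact hpl.exists_eq_forall_mem_Icc_hasDerivWithinAt₀

theorem ContinuousLinearMap.apply_eq_sum_mul_apply_single {n : ℕ} (L : (Fin n → ℝ) →L[ℝ] ℝ)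
    (w : Fin n → ℝ) : L w = ∑ j, w j * L (Pi.single j 1) := by
  conv_lhs => rw [← Finset.univ_sum_single w]
  rw [map_sum]
  refine Finset.sum_congr rfl fun j _ => ?_
  rw [← smul_eq_mul, ← map_smul, ← Pi.single_smul, smul_eq_mul, mul_one]

theorem ContinuousLinearMap.norm_le_of_abs_apply_single_le {n : ℕ} (L : (Fin n → ℝ) →L[ℝ] ℝ)
    {C : ℝ} (h : ∀ j, |L (Pi.single j 1)| ≤ C) : ‖L‖ ≤ n * C := by
  have hC : 0 ≤ (n : ℝ) * C := by
    rcases n with _ | n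
    · simp
    · exact mul_nonneg (Nat.cast_nonneg _) ((abs_nonneg _).trans (h 0))
  refine L.opNorm_le_bound hC fun w => ?_
  calc ‖L w‖ = |∑ j, w j * L (Pi.single j 1)| := by
        rw [Real.norm_eq_abs, L.apply_eq_sum_mul_apply_single]
    _ ≤ ∑ j, |w j| * |L (Pi.single j 1)| := by
        simpa only [abs_mul] using
          Finset.abs_sum_le_sum_abs (fun j => w j * L (Pi.single j 1)) Finset.univ
    _ ≤ ∑ _j : Fin n, ‖w‖ * C := by
        gcongr with j
        · exact norm_le_pi_norm w j
        · exact h j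
    _ = n * C * ‖w‖ := by simp; ring

section Calculus

variable {E F : Type*} [NormedAddCommGroup E] [NormedSpace ℝ E] [NormedAddCommGroup F]
  [NormedSpace ℝ F]

theorem fderiv_fderiv_apply_add_fderiv_apply_eq_zero {f : E → F} {V : E → E} {V' : E →L[ℝ] E}
    {p : E} (hf : DifferentiableAt ℝ (fderiv ℝ f) p) (hV : HasFDerivAt V V' p)
    (h : ∀ q, fderiv ℝ f q (V q) = 0) (w : E) :
    fderiv ℝ (fderiv ℝ f) p w (V p) + fderiv ℝ f p (V' w) = 0 := by
  have hD := hf.hasFDerivAt.clm_apply hV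
  rw [show (fun q => fderiv ℝ f q (V q)) = fun _ => 0 from funext h] at hD
  simpa [add_comm] using congrArg (· w) (hD.unique (hasFDerivAt_const 0 p))

end Calculus

section SpaceTime

variable {f ρ : ℝ × (Fin 3 → ℝ) → ℝ} {u : ℝ × (Fin 3 → ℝ) → Fin 3 → ℝ} {p : ℝ × (Fin 3 → ℝ)}

theorem fderiv_apply_one_eq_pt_add_sum (a : Fin 3 → ℝ) :
    fderiv ℝ f p (1, a) = pt f p + ∑ i, a i * pdx i f p := by
  have hsplit : ((1 : ℝ), a) = (1, 0) + ∑ i, a i • ((0 : ℝ), (Pi.single i 1 : Fin 3 → ℝ)) := by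
    ext <;> simp [Prod.fst_sum, Prod.snd_sum, Pi.single_apply]
  simp only [hsplit, map_add, map_sum, map_smul, smul_eq_mul, pt, pdx]

theorem lipschitzWith_section_of_abs_pdx_le (hf : Differentiable ℝ f) {C : ℝ}
    (hC : ∀ p j, |pdx j f p| ≤ C) (t : ℝ) :
    LipschitzWith (3 * C).toNNReal fun y => f (t, y) := by
  have hD : ∀ y, HasFDerivAt (fun y => f (t, y)) ((fderiv ℝ f (t, y)).comp (.inr ℝ ℝ _)) y :=
    fun y => (hf (t, y)).hasFDerivAt.comp y (hasFDerivAt_prodMk_right t y)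
  refine lipschitzWith_of_nnnorm_fderiv_le (fun y => (hD y).differentiableAt) fun y => ?_
  rw [← NNReal.coe_le_coe, coe_nnnorm, Real.coe_toNNReal', (hD y).fderiv]
  refine le_max_of_le_left ?_
  simpa using ContinuousLinearMap.norm_le_of_abs_apply_single_le _ fun j => hC (t, y) j

theorem fderiv_apply_apply_eq_pdx (hu : DifferentiableAt ℝ u p) (i j : Fin 3) :
    fderiv ℝ u p (0, Pi.single j 1) i = pdx j (fun q => u q i) p := by
  rw [fderiv_pi fun i => differentiableAt_pi.1 hu i]
  rfl

/-- The transport equation says that `(1, u)` lies in the kernel of `Dρ`; differentiating this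
in the normal direction `e₃`, the slip conditions make `∂₃u` a multiple of `e₃`. -/
theorem fderiv_fderiv_apply_normal_of_transport (hρ : ContDiff ℝ 2 ρ)
    (hu : DifferentiableAt ℝ u p) (htransport : ∀ q, pt ρ q + ∑ i, u q i * pdx i ρ q = 0)
    (h0 : pdx 2 (fun q => u q 0) p = 0) (h1 : pdx 2 (fun q => u q 1) p = 0) :
    fderiv ℝ (fderiv ℝ ρ) p (1, u p) (0, Pi.single 2 1) =
      -pdx 2 (fun q => u q 2) p * pdx 2 ρ p := by
  have hρ' : DifferentiableAt ℝ (fderiv ℝ ρ) p :=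
    (hρ.fderiv_right (m := 1) le_rfl).differentiable one_ne_zero p
  have hV : HasFDerivAt (fun q => ((1 : ℝ), u q)) ((0 : _ →L[ℝ] ℝ).prod (fderiv ℝ u p)) p :=
    (hasFDerivAt_const 1 p).prodMk hu.hasFDerivAt
  have hker : ∀ q, fderiv ℝ ρ q (1, u q) = 0 := fun q => by
    rw [fderiv_apply_one_eq_pt_add_sum]; exact htransport q
  have hnormal : fderiv ℝ u p (0, Pi.single 2 1) = pdx 2 (fun q => u q 2) p • Pi.single 2 1 := by
    ext i
    fin_cases i <;> simp [fderiv_apply_apply_eq_pdx hu, h0, h1]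
  have hD := fderiv_fderiv_apply_add_fderiv_apply_eq_zero hρ' hV hker (0, Pi.single 2 1)
  rw [hρ.contDiffAt.isSymmSndFDerivAt (by simp)]
  simp only [ContinuousLinearMap.prod_apply, zero_apply, hnormal] at hD
  rw [← Prod.smul_zero_mk, map_smul] at hD
  simp only [pdx, smul_eq_mul] at hD ⊢
  linarith

theorem hasDerivWithinAt_pdx_comp {γ : ℝ → Fin 3 → ℝ}
    {γ' : Fin 3 → ℝ} {s : Set ℝ} {t : ℝ} (j : Fin 3)
    (hρ : DifferentiableAt ℝ (fderiv ℝ ρ) (t, γ t)) (hγ : HasDerivWithinAt γ γ' s t) :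
    HasDerivWithinAt (fun τ => pdx j ρ (τ, γ τ))
      (fderiv ℝ (fderiv ℝ ρ) (t, γ t) (1, γ') (0, Pi.single j 1)) s t := by
  have := (hρ.hasFDerivAt.clm_apply (hasFDerivAt_const ((0 : ℝ), Pi.single j 1) _))
    |>.comp_hasDerivWithinAt t ((hasDerivWithinAt_id t s).prodMk hγ)
  exact this.congr_deriv (by simp)

/-- The characteristic is the flow of `u` with its normal component switched off: that flow
keeps `x₃` constant, and on the boundary plane it agrees with `u`. -/
theorem exists_characteristic_mem_boundary (hu : Differentiable ℝ u) {C D : ℝ}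
    (hC : ∀ p i, |u p i| ≤ C) (hD : ∀ p i j, |pdx j (fun q => u q i) p| ≤ D)
    (hnormal : ∀ t, 0 ≤ t → ∀ x : Fin 3 → ℝ, x 2 = 0 → u (t, x) 2 = 0)
    {T : ℝ} (hT : 0 ≤ T) {x : Fin 3 → ℝ} (hx : x 2 = 0) :
    ∃ γ : ℝ → Fin 3 → ℝ, γ T = x ∧
      ∀ t ∈ Icc 0 T, γ t 2 = 0 ∧ HasDerivWithinAt γ (u (t, γ t)) (Icc 0 T) t := by
  set v : ℝ → (Fin 3 → ℝ) → Fin 3 → ℝ := fun t y => Function.update (u (t, y)) 2 0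
  have hui : ∀ i, Differentiable ℝ fun q => u q i := differentiable_pi.1 hu
  have hlip : ∀ t, LipschitzWith (3 * D).toNNReal (v t) := fun t => lipschitzWith_pi fun i => by
    rcases eq_or_ne i 2 with rfl | hi
    · simpa [v] using LipschitzWith.const' (0 : ℝ)
    · simpa [v, hi] using lipschitzWith_section_of_abs_pdx_le (hui i) (hD · i) t
  have hcont : ∀ y, Continuous (v · y) := fun y => continuous_pi fun i => by
    rcases eq_or_ne i 2 with rfl | hi
    · simpa [v] using continuous_const
    · simp only [v, Function.update_of_ne hi]
      exact (hui i).continuous.comp (Continuous.prodMk_left y)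
  have hbdd : ∀ t y, ‖v t y‖ ≤ C := fun t y => (pi_norm_le_iff_of_nonempty _).2 fun i => by
    rcases eq_or_ne i 2 with rfl | hi
    · simpa [v] using (abs_nonneg _).trans (hC (t, y) 2)
    · simpa [v, hi] using hC (t, y) i
  obtain ⟨γ, hγT, hγ⟩ := exists_eq_right_forall_mem_Icc_hasDerivWithinAt hlip hcont hbdd hT x
  have hγ2 : ∀ t ∈ Icc 0 T, γ t 2 = γ 0 2 := by
    refine constant_of_has_deriv_right_zero
      (fun t ht => ((continuous_apply 2).continuousAt.comp_continuousWithinAt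
        (hγ t ht).continuousWithinAt)) fun t ht => ?_
    have := ((hasFDerivAt_apply 2 (γ t)).comp_hasDerivWithinAt t (hγ t (Ico_subset_Icc_self ht)))
      |>.mono_of_mem_nhdsWithin (Icc_mem_nhdsGE_of_mem ht)
    simpa [v, Function.comp_def] using this
  have hγ0 : ∀ t ∈ Icc 0 T, γ t 2 = 0 := fun t ht => by
    rw [hγ2 t ht, ← hγ2 T ⟨hT, le_rfl⟩, hγT, hx]
  refine ⟨γ, hγT, fun t ht => ⟨hγ0 t ht, (hγ t ht).congr_deriv ?_⟩⟩
  exact Function.update_eq_self_iff.2 (hnormal t ht.1 (γ t) (hγ0 t ht)).symm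

end SpaceTime

theorem normal_derivative_density_preserved_general
    (ρ : ℝ × (Fin 3 → ℝ) → ℝ) (u : ℝ × (Fin 3 → ℝ) → Fin 3 → ℝ)
    (hu : ContDiff ℝ 1 u)
    (hubdd : ∃ C : ℝ, ∀ (p : ℝ × (Fin 3 → ℝ)) (i : Fin 3), |u p i| ≤ C)
    (hDubdd : ∃ C : ℝ, ∀ (p : ℝ × (Fin 3 → ℝ)) (i j : Fin 3),
      |pdx j (fun q => u q i) p| ≤ C)
    (hρ : ContDiff ℝ 2 ρ)
    (hslip : ∀ (t : ℝ), 0 ≤ t → ∀ x : Fin 3 → ℝ, x 2 = 0 →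
      u (t, x) 2 = 0 ∧ pdx 2 (fun q => u q 0) (t, x) = 0
        ∧ pdx 2 (fun q => u q 1) (t, x) = 0)
    (htransport : ∀ p : ℝ × (Fin 3 → ℝ),
      pt ρ p + ∑ i : Fin 3, u p i * pdx i ρ p = 0)
    (hinit : ∀ x : Fin 3 → ℝ, x 2 = 0 → pdx 2 ρ (0, x) = 0) :
    ∀ (t : ℝ), 0 ≤ t → ∀ x : Fin 3 → ℝ, x 2 = 0 → pdx 2 ρ (t, x) = 0 := by
  intro T hT x hx
  obtain ⟨C, hC⟩ := hubdd
  obtain ⟨D, hD⟩ := hDubdd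
  have hu' : Differentiable ℝ u := hu.differentiable one_ne_zero
  obtain ⟨γ, hγT, hγ⟩ := exists_characteristic_mem_boundary hu' hC hD
    (fun t ht y hy => (hslip t ht y hy).1) hT hx
  have hderiv : ∀ t ∈ Icc 0 T, HasDerivWithinAt (fun τ => pdx 2 ρ (τ, γ τ))
      (-pdx 2 (fun q => u q 2) (t, γ t) * pdx 2 ρ (t, γ t)) (Icc 0 T) t := fun t ht => by
    obtain ⟨hγ2, hγ'⟩ := hγ t ht
    obtain ⟨-, h0, h1⟩ := hslip t ht.1 (γ t) hγ2
    rw [← fderiv_fderiv_apply_normal_of_transport hρ (hu' _) htransport h0 h1]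
    exact hasDerivWithinAt_pdx_comp 2
      ((hρ.fderiv_right (m := 1) le_rfl).differentiable one_ne_zero _) hγ'
  have hzero := eq_zero_of_abs_deriv_le_mul_abs_self_of_eq_zero_right
    (fun t ht => (hderiv t ht).continuousWithinAt)
    (fun t ht => (hderiv t (Ico_subset_Icc_self ht)).mono_of_mem_nhdsWithin
      (Icc_mem_nhdsGE_of_mem ht))
    (hinit (γ 0) (hγ 0 ⟨le_rfl, hT⟩).1)
    (fun t _ => by
      simpa [abs_mul] using mul_le_mul_of_nonneg_right (hD (t, γ t) 2 2) (abs_nonneg _))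
    T ⟨hT, le_rfl⟩
  simpa [hγT] using hzero

/-- Proposition 2.1 (flat-boundary form): if `u` satisfies the slip boundary
conditions `u₃ = 0`, `∂₃u₁ = ∂₃u₂ = 0` on `{x₃ = 0}` and `ρ` solves the
transport equation `∂ₜρ + u·∇ρ = 0`, then the compatibility condition
`∂₃ρ = 0` on the flat boundary is propagated from `t = 0` to all `t ≥ 0`. -/
theorem normal_derivative_density_preserved
    (ρ : ℝ × (Fin 3 → ℝ) → ℝ) (u : ℝ × (Fin 3 → ℝ) → Fin 3 → ℝ)
    (hu : ContDiff ℝ 1 u)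
    (hubdd : ∃ C : ℝ, ∀ (p : ℝ × (Fin 3 → ℝ)) (i : Fin 3), |u p i| ≤ C)
    (hDubdd : ∃ C : ℝ, ∀ (p : ℝ × (Fin 3 → ℝ)) (i j : Fin 3),
      |pdx j (fun q => u q i) p| ≤ C)
    (hρ : ContDiff ℝ 2 ρ)
    (hDρbdd : ∃ C : ℝ, ∀ p : ℝ × (Fin 3 → ℝ),
      ‖fderiv ℝ ρ p‖ ≤ C ∧ ‖fderiv ℝ (fderiv ℝ ρ) p‖ ≤ C)
    (hslip : ∀ (t : ℝ), 0 ≤ t → ∀ x : Fin 3 → ℝ, x 2 = 0 →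
      u (t, x) 2 = 0 ∧ pdx 2 (fun q => u q 0) (t, x) = 0
        ∧ pdx 2 (fun q => u q 1) (t, x) = 0)
    (htransport : ∀ p : ℝ × (Fin 3 → ℝ),
      pt ρ p + ∑ i : Fin 3, u p i * pdx i ρ p = 0)
    (hinit : ∀ x : Fin 3 → ℝ, x 2 = 0 → pdx 2 ρ (0, x) = 0) :
    ∀ (t : ℝ), 0 ≤ t → ∀ x : Fin 3 → ℝ, x 2 = 0 → pdx 2 ρ (t, x) = 0 :=
  normal_derivative_density_preserved_general ρ u hu hubdd hDubdd hρ hslip htransport hinit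
end
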